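/- In the environment E of Example 2 (states E, E₀, E₁ with transitions E →a₀ E₀, E →a₀ E₁, E₀ →a₀ E₀, E₁ →b E₁, where a₀ is public and b is private), for every deterministic process M over public alphabet {a₀}, either E ∥ M has a maximal finite (deadlocked) computation, or E ∥ M has an infinite computation whose trace contains infinitely many b's. Hence the coordination problem with specification 'finitely many b actions' and no acceptable finite computations is unrealizable. -/
import Mathlib


/-- Actions of Example 2: public `a0`, private `b`. -/
inductive Act where
  | a0 : Act
  | b : Act
deriving DecidableEq

/-- Environment states of Example 2. -/
inductive ESt where
  | E : ESt
  | E0 : ESt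
  | E1 : ESt
deriving DecidableEq

/-- Environment transitions: E →a₀ E₀, E →a₀ E₁, E₀ →a₀ E₀, E₁ →b E₁. -/
def Etrans : ESt → Act → ESt → Prop := fun s a t =>
  match s, a, t with
  | .E, .a0, .E0 => True
  | .E, .a0, .E1 => True
  | .E0, .a0, .E0 => True
  | .E1, .b, .E1 => True
  | _, _, _ => False

/-- Composition `E ∥ M`: synchronize on the public action `a0`,
the private action `b` interleaves (E moves alone). -/
def Ctrans {S : Type*} (mtrans : S → Act → S → Prop) :
    ESt × S → Act → ESt × S → Prop := fun c a c' =>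
  (a = .a0 ∧ Etrans c.1 a c'.1 ∧ mtrans c.2 a c'.2) ∨
  (a = .b ∧ Etrans c.1 a c'.1 ∧ c'.2 = c.2)

/-- Finite computations of the composition from the initial state. -/
inductive Reach {S : Type*} (init : S) (tr : S → Act → S → Prop) : List Act → S → Prop
  | nil : Reach init tr [] init
  | snoc {σ s a t} : Reach init tr σ s → tr s a t → Reach init tr (σ ++ [a]) t

/-- Example 2 is unrealizable: for every deterministic process `M` over the
public alphabet `{a₀}`, either `E ∥ M` has a maximal finite (deadlocked)
computation, or `E ∥ M` has an infinite computation whose trace contains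
infinitely many `b`'s. -/
theorem example2_unrealizable {S : Type*} (minit : S) (mtrans : S → Act → S → Prop)
    (hpub : ∀ s a t, mtrans s a t → a = .a0)
    (hdet : ∀ s a t t', mtrans s a t → mtrans s a t' → t = t') :
    (∃ (σ : List Act) (c : ESt × S), Reach (ESt.E, minit) (Ctrans mtrans) σ c ∧
        ∀ a c', ¬ Ctrans mtrans c a c') ∨
    (∃ (ss : ℕ → ESt × S) (as : ℕ → Act), ss 0 = (ESt.E, minit) ∧
        (∀ i, Ctrans mtrans (ss i) (as i) (ss (i + 1))) ∧
        {i | as i = Act.b}.Infinite) := by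
  by_cases h : ∃ t, mtrans minit Act.a0 t
  · obtain ⟨t, ht⟩ := h
    right
    refine ⟨fun i => if i = 0 then (ESt.E, minit) else (ESt.E1, t),
      fun i => if i = 0 then Act.a0 else Act.b, rfl, ?_, ?_⟩
    · intro i
      cases i with
      | zero => exact Or.inl ⟨rfl, trivial, ht⟩
      | succ n => exact Or.inr ⟨rfl, trivial, rfl⟩
    · apply Set.Infinite.mono (s := {i : ℕ | 1 ≤ i})
      · intro i hi
        simp only [Set.mem_setOf_eq] at hi ⊢
        rw [if_neg (by omega)]
      · exact Set.Ici_infinite 1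
  · left
    refine ⟨[], (ESt.E, minit), Reach.nil, ?_⟩
    rintro a c' (⟨rfl, _, hm⟩ | ⟨rfl, he, _⟩)
    · exact h ⟨c'.2, hm⟩
    · exact he
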